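/- arXiv:2101.09506 — 2 statements merged into one kernel-verified Lean document; each statement's English description precedes it below -/
import Mathlib

section
/- The linear map τ̂₀ is an algebra automorphism of Ĥ, i.e. τ̂₀ is a bijective linear map satisfying τ̂₀(x·y) = τ̂₀(x)·τ̂₀(y) for all x, y ∈ Ĥ. -/
namespace HatAlgebra

/-- Basis of the algebra `Ĥ`: vectors `â i` for `i : ℤ`, `ŝ_{0̄,j}` for `j` a positive
integer, and `ŝ_{1̄,3k}`, `ŝ_{2̄,3k}` for `k` a positive integer. -/
inductive HatB : Type
  | a : ℤ → HatB
  | s0 : ℕ+ → HatB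
  | s1 : ℕ+ → HatB
  | s2 : ℕ+ → HatB
  deriving DecidableEq

variable (F : Type*) [Field F]

/-- The underlying vector space of `Ĥ`: the free `F`-vector space on `HatB`. -/
abbrev HatH : Type _ := HatB →₀ F

/-- The basis vector `â i`. -/
noncomputable def aHat (i : ℤ) : HatH F := Finsupp.single (HatB.a i) 1

/-- The element `ŝ_{r̄,j}` of `Ĥ`, with the conventions `ŝ_{r̄,0} = 0` and
`ŝ_{1̄,j} = ŝ_{0̄,j} = ŝ_{2̄,j}` whenever `3 ∤ j`. -/
noncomputable def sHat (r : ZMod 3) (j : ℕ) : HatH F :=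
  if h : j = 0 then 0
  else if h3 : 3 ∣ j then
    if r = 0 then Finsupp.single (HatB.s0 ⟨j, Nat.pos_of_ne_zero h⟩) 1
    else if r = 1 then
      Finsupp.single (HatB.s1 ⟨j / 3,
        Nat.div_pos (Nat.le_of_dvd (Nat.pos_of_ne_zero h) h3) (by norm_num)⟩) 1
    else
      Finsupp.single (HatB.s2 ⟨j / 3,
        Nat.div_pos (Nat.le_of_dvd (Nat.pos_of_ne_zero h) h3) (by norm_num)⟩) 1
  else Finsupp.single (HatB.s0 ⟨j, Nat.pos_of_ne_zero h⟩) 1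

/-- The operation `∗`: `(−1) ∗ 1̄ = −1`, `(−1) ∗ 2̄ = 1`, `0 ∗ t̄ = 0`. -/
def hatStar (x : ℤ) (t : ZMod 3) : ℤ :=
  if x = 0 then 0 else if t = 1 then -1 else if t = 2 then 1 else 0

/-- The coefficient `(δ_{ī,r̄} − 1) ∗ (ī − r̄)` appearing in rule (Ĥ2). -/
def hatC (i r : ZMod 3) : ℤ := hatStar ((if i = r then 1 else 0) - 1) (i - r)

/-- Rule (Ĥ2): the product `â_i · ŝ_{r̄,j}`. -/
noncomputable def aMulS (i : ℤ) (r : ZMod 3) (j : ℕ) : HatH F :=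
  (-2 : F) • aHat F i + (aHat F (i - (j : ℤ)) + aHat F (i + (j : ℤ))) - sHat F r j
    - (hatC (i : ZMod 3) r : F) • (sHat F (r - 1) j - sHat F (r + 1) j)

/-- `ŝ_{0̄,n} + ŝ_{1̄,n} + ŝ_{2̄,n}`. -/
noncomputable def sSum (n : ℕ) : HatH F := sHat F 0 n + sHat F 1 n + sHat F 2 n

/-- For `r ≠ t` in `ℤ/3ℤ`, the signed sum `ŝ_{r̄,n} + ŝ_{t̄,n} − ŝ_{m̄,n}` where `m̄`
is the third residue class (appearing in rules (Ĥ5), (Ĥ6), (Ĥ7)). -/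
noncomputable def sT (r t : ZMod 3) (n : ℕ) : HatH F :=
  sHat F r n + sHat F t n - sHat F (-(r + t)) n

/-- Rules (Ĥ3)–(Ĥ7): the product `ŝ_{r̄,i} · ŝ_{t̄,j}`. -/
noncomputable def sMulS (r : ZMod 3) (i : ℕ) (t : ZMod 3) (j : ℕ) : HatH F :=
  if 3 ∣ i ∧ 3 ∣ j then
    if r = t then
      (2 : F) • (sHat F r i + sHat F r j) - (sHat F r (Nat.dist i j) + sHat F r (i + j))
    else
      (2 : F) • (sT F r t i + sT F r t j) - (sT F r t (Nat.dist i j) + sT F r t (i + j))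
  else
    (2 : F) • (sHat F r i + sHat F t j) - (2 : F) • (sSum F (Nat.dist i j) + sSum F (i + j))

/-- The product of `Ĥ` on basis vectors, given by rules (Ĥ1)–(Ĥ7) (extended
symmetrically, since the product is commutative). -/
noncomputable def mulB : HatB → HatB → HatH F
  | .a i, .a j => (-2 : F) • (aHat F i + aHat F j) + sHat F (i : ZMod 3) (i - j).natAbs
  | .a i, .s0 j => aMulS F i 0 (j : ℕ)
  | .s0 j, .a i => aMulS F i 0 (j : ℕ)
  | .a i, .s1 k => aMulS F i 1 (3 * (k : ℕ))
  | .s1 k, .a i => aMulS F i 1 (3 * (k : ℕ))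
  | .a i, .s2 k => aMulS F i 2 (3 * (k : ℕ))
  | .s2 k, .a i => aMulS F i 2 (3 * (k : ℕ))
  | .s0 i, .s0 j => sMulS F 0 (i : ℕ) 0 (j : ℕ)
  | .s0 i, .s1 k => sMulS F 0 (i : ℕ) 1 (3 * (k : ℕ))
  | .s1 k, .s0 i => sMulS F 0 (i : ℕ) 1 (3 * (k : ℕ))
  | .s0 i, .s2 k => sMulS F 0 (i : ℕ) 2 (3 * (k : ℕ))
  | .s2 k, .s0 i => sMulS F 0 (i : ℕ) 2 (3 * (k : ℕ))
  | .s1 h, .s1 k => sMulS F 1 (3 * (h : ℕ)) 1 (3 * (k : ℕ))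
  | .s1 h, .s2 k => sMulS F 1 (3 * (h : ℕ)) 2 (3 * (k : ℕ))
  | .s2 k, .s1 h => sMulS F 1 (3 * (h : ℕ)) 2 (3 * (k : ℕ))
  | .s2 h, .s2 k => sMulS F 2 (3 * (h : ℕ)) 2 (3 * (k : ℕ))

/-- The commutative bilinear product of `Ĥ`, as a bilinear map. -/
noncomputable def hatMul : HatH F →ₗ[F] HatH F →ₗ[F] HatH F :=
  Finsupp.lift (HatH F →ₗ[F] HatH F) F HatB fun x => Finsupp.lift (HatH F) F HatB (mulB F x)

/-- The product of two elements of `Ĥ`. -/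
noncomputable def hmul (x y : HatH F) : HatH F := hatMul F x y


/-- The linear map `τ̂₀`, determined on basis vectors by `â_i ↦ â_{−i}`,
`ŝ_{0̄,j} ↦ ŝ_{0̄,j}`, `ŝ_{1̄,3k} ↦ ŝ_{2̄,3k}`, `ŝ_{2̄,3k} ↦ ŝ_{1̄,3k}`. -/
noncomputable def tau0B : HatB → HatH F
  | .a i => aHat F (-i)
  | .s0 j => sHat F 0 (j : ℕ)
  | .s1 k => sHat F 2 (3 * (k : ℕ))
  | .s2 k => sHat F 1 (3 * (k : ℕ))

noncomputable def tau0 : HatH F →ₗ[F] HatH F := Finsupp.lift (HatH F) F HatB (tau0B F)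

/-!
`τ̂₀` is the linear extension of the involution `â_i ↦ â_{−i}`, `ŝ_{r̄,j} ↦ ŝ_{−r̄,j}` of the
basis, so it is bijective, and it suffices to check multiplicativity on basis vectors. There
each rule (Ĥ1)–(Ĥ7) is carried to itself by `i ↦ −i`, `r̄ ↦ −r̄`: the only asymmetric
ingredient, the coefficient `(δ_{ī,r̄} − 1) ∗ (ī − r̄)` of (Ĥ2), changes sign, and so does
the factor `ŝ_{r̄−1̄,j} − ŝ_{r̄+1̄,j}` it multiplies.
-/

def tau0Index : HatB → HatB
  | .a i => .a (-i)
  | .s0 j => .s0 j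
  | .s1 k => .s2 k
  | .s2 k => .s1 k

lemma tau0Index_involutive : Function.Involutive tau0Index := by
  rintro (_ | _ | _ | _) <;> simp [tau0Index]

section

variable {F}

lemma sHat_zero (r : ZMod 3) : sHat F r 0 = 0 := by
  simp [sHat]

lemma sHat_of_not_dvd {j : ℕ} (h : ¬ 3 ∣ j) (r : ZMod 3) : sHat F r j = sHat F 0 j := by
  have hj : j ≠ 0 := by rintro rfl; exact h (dvd_zero 3)
  simp only [sHat, dif_neg hj, dif_neg h]

lemma sHat_zero_eq_single (j : ℕ+) : sHat F 0 (j : ℕ) = Finsupp.single (HatB.s0 j) 1 := by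
  simp [sHat, j.ne_zero]
  rfl

lemma sHat_one_three_mul_eq_single (k : ℕ+) :
    sHat F 1 (3 * (k : ℕ)) = Finsupp.single (HatB.s1 k) 1 := by
  simp [sHat, k.ne_zero]
  rfl

lemma sHat_two_three_mul_eq_single (k : ℕ+) :
    sHat F 2 (3 * (k : ℕ)) = Finsupp.single (HatB.s2 k) 1 := by
  simp [sHat, k.ne_zero, show (2 : ZMod 3) ≠ 0 by decide, show (2 : ZMod 3) ≠ 1 by decide]
  rfl

lemma tau0B_eq_single (b : HatB) : tau0B F b = Finsupp.single (tau0Index b) 1 := by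
  cases b <;> simp only [tau0B, tau0Index, aHat, sHat_zero_eq_single,
    sHat_one_three_mul_eq_single, sHat_two_three_mul_eq_single]

lemma tau0_single (b : HatB) (c : F) :
    tau0 F (Finsupp.single b c) = Finsupp.single (tau0Index b) c := by
  rw [tau0, Finsupp.lift_apply, Finsupp.sum_single_index (zero_smul F (tau0B F b)),
    tau0B_eq_single, Finsupp.smul_single_one]

lemma tau0_involutive : Function.Involutive (tau0 F) := by
  have h : tau0 F ∘ₗ tau0 F = LinearMap.id :=
    Finsupp.lhom_ext fun b c => by simp [tau0_single, tau0Index_involutive b]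
  exact fun x => LinearMap.congr_fun h x

lemma hatMul_single (b c : HatB) :
    hatMul F (Finsupp.single b 1) (Finsupp.single c 1) = mulB F b c := by
  simp [hatMul, Finsupp.lift_apply]

lemma tau0_aHat (i : ℤ) : tau0 F (aHat F i) = aHat F (-i) :=
  tau0_single (.a i) 1

lemma tau0_sHat (r : ZMod 3) (j : ℕ) : tau0 F (sHat F r j) = sHat F (-r) j := by
  rcases Nat.eq_zero_or_pos j with rfl | hj
  · simp [sHat_zero]
  by_cases h3 : 3 ∣ j
  · obtain ⟨k, rfl⟩ := h3
    lift k to ℕ+ using pos_of_mul_pos_right hj (by norm_num)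
    obtain rfl | rfl | rfl : r = 0 ∨ r = 1 ∨ r = 2 := by revert r; decide
    · rw [neg_zero, show 3 * (k : ℕ) = ((3 * k : ℕ+) : ℕ) by simp, sHat_zero_eq_single,
        tau0_single]
      rfl
    · rw [sHat_one_three_mul_eq_single, tau0_single, show (-1 : ZMod 3) = 2 by decide,
        sHat_two_three_mul_eq_single]
      rfl
    · rw [sHat_two_three_mul_eq_single, tau0_single, show (-2 : ZMod 3) = 1 by decide,
        sHat_one_three_mul_eq_single]
      rfl
  · have h0 : sHat F 0 j = Finsupp.single (HatB.s0 ⟨j, hj⟩) 1 := sHat_zero_eq_single ⟨j, hj⟩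
    rw [sHat_of_not_dvd h3 r, sHat_of_not_dvd h3 (-r), h0, tau0_single]
    rfl

lemma hatC_neg : ∀ i r : ZMod 3, hatC (-i) (-r) = -hatC i r := by decide

lemma tau0_aMulS (i : ℤ) (r : ZMod 3) (j : ℕ) :
    tau0 F (aMulS F i r j) = aMulS F (-i) (-r) j := by
  simp only [aMulS, map_add, map_sub, map_smul, tau0_aHat, tau0_sHat, Int.cast_neg, hatC_neg,
    neg_sub', neg_add', sub_neg_eq_add]
  module

lemma tau0_sSum (n : ℕ) : tau0 F (sSum F n) = sSum F n := by
  simp only [sSum, map_add, tau0_sHat, neg_zero, show (-1 : ZMod 3) = 2 by decide,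
    show (-2 : ZMod 3) = 1 by decide]
  abel

lemma tau0_sT (r t : ZMod 3) (n : ℕ) : tau0 F (sT F r t n) = sT F (-r) (-t) n := by
  simp only [sT, map_add, map_sub, tau0_sHat, neg_add]

lemma tau0_sMulS (r : ZMod 3) (i : ℕ) (t : ZMod 3) (j : ℕ) :
    tau0 F (sMulS F r i t j) = sMulS F (-r) i (-t) j := by
  simp only [sMulS, neg_inj]
  split_ifs <;> simp only [map_sub, map_add, map_smul, tau0_sHat, tau0_sT, tau0_sSum]

lemma sT_comm (r t : ZMod 3) (n : ℕ) : sT F r t n = sT F t r n := by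
  simp only [sT, add_comm r t, add_comm (sHat F r n)]

lemma sMulS_comm (r : ZMod 3) (i : ℕ) (t : ZMod 3) (j : ℕ) :
    sMulS F r i t j = sMulS F t j r i := by
  simp only [sMulS, and_comm (a := 3 ∣ i), eq_comm (a := r), Nat.dist_comm i, add_comm i,
    sT_comm r t]
  split_ifs with _ hrt
  · subst hrt; module
  all_goals module

lemma tau0_mulB (b c : HatB) :
    tau0 F (mulB F b c) = mulB F (tau0Index b) (tau0Index c) := by
  have neg_one : (-1 : ZMod 3) = 2 := by decide
  have neg_two : (-2 : ZMod 3) = 1 := by decide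
  rcases b with i | j | k | k <;> rcases c with i' | j' | k' | k' <;>
    simp only [mulB, tau0Index, tau0_aMulS, tau0_sMulS, neg_zero, neg_one, neg_two]
  case a.a =>
    rw [map_add, map_smul, map_add, tau0_aHat, tau0_aHat, tau0_sHat, Int.cast_neg,
      neg_sub_neg, ← Int.natAbs_neg, neg_sub]
  all_goals exact sMulS_comm ..

lemma tau0_hatMul (x y : HatH F) :
    tau0 F (hatMul F x y) = hatMul F (tau0 F x) (tau0 F y) := by
  have h : (hatMul F).compr₂ (tau0 F) = (hatMul F).compl₁₂ (tau0 F) (tau0 F) :=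
    LinearMap.ext_basis Finsupp.basisSingleOne Finsupp.basisSingleOne fun b c => by
      simp [hatMul_single, tau0_single, tau0_mulB]
  exact LinearMap.congr_fun₂ h x y

end

theorem tau0_automorphism :
    Function.Bijective (tau0 F) ∧
      ∀ x y : HatH F, tau0 F (hmul F x y) = hmul F (tau0 F x) (tau0 F y) :=
  ⟨tau0_involutive.bijective, tau0_hatMul⟩

end HatAlgebra
end

section
/- The axis â₀ of Ĥ is primitive: the 1-eigenspace of the multiplication operator ad_{â₀} : x ↦ â₀·x equals the one-dimensional subspace 𝔽·â₀, i.e. for x ∈ Ĥ, â₀·x = x if and only if x is a scalar multiple of â₀. -/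
namespace HatAlgebra

variable (F : Type*) [Field F]

/-!
Write `x_b` for the coordinates of `x` in the basis of `Ĥ`. The coordinates of `â₀x` at
`ŝ_{1̄,3k}` and `ŝ_{2̄,3k}` are `x_{ŝ_{2̄,3k}} - x_{ŝ_{1̄,3k}}` and its negative, so a fixed
point `â₀x = x` has these coordinates zero as soon as `3 ≠ 0`. For such `x` and `n > 0`, the
coordinates of `â₀x` at `â_{±n}` and `ŝ_{0̄,n}` are `-2x_{â_{±n}} + x_{ŝ_{0̄,n}}` and
`x_{â_n} + x_{â_{-n}} - x_{ŝ_{0̄,n}}`; the fixed-point equations then give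
`4 x_{ŝ_{0̄,n}} = 0` and `3 x_{â_{±n}} = x_{ŝ_{0̄,n}}`, so only the `â₀`-coordinate survives.
Conversely `â₀â₀ = -4â₀`, which is `â₀` in characteristic `5`.
-/

variable {F}

open Finsupp

lemma sHat_zero_coe (n : ℕ+) : sHat F 0 n = single (.s0 n) 1 := by
  simp [sHat]
  rfl

lemma sHat_zero_three_mul (k : ℕ+) : sHat F 0 (3 * k) = single (.s0 (3 * k)) 1 :=
  sHat_zero_coe (3 * k)

lemma sHat_one_three_mul (k : ℕ+) : sHat F 1 (3 * k) = single (.s1 k) 1 := by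
  simp [sHat, show (1 : ZMod 3) ≠ 0 by decide]
  rfl

lemma sHat_two_three_mul (k : ℕ+) : sHat F 2 (3 * k) = single (.s2 k) 1 := by
  simp [sHat, show (2 : ZMod 3) ≠ 0 by decide, show (2 : ZMod 3) ≠ 1 by decide]
  rfl

@[simp] lemma sHat_apply_a (r : ZMod 3) (j : ℕ) (i : ℤ) : sHat F r j (.a i) = 0 := by
  unfold sHat; split_ifs <;> simp

lemma sHat_zero_apply_s0 (j : ℕ) (n : ℕ+) : sHat F 0 j (.s0 n) = if j = n then 1 else 0 := by
  rcases Nat.eq_zero_or_pos j with rfl | hj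
  · simp [sHat, (PNat.pos n).ne]
  · lift j to ℕ+ using hj
    simp [sHat_zero_coe, single_apply]

@[simp] lemma sHat_zero_apply_s1 (j : ℕ) (k : ℕ+) : sHat F 0 j (.s1 k) = 0 := by
  rcases Nat.eq_zero_or_pos j with rfl | hj
  · simp [sHat]
  · lift j to ℕ+ using hj
    simp [sHat_zero_coe]

@[simp] lemma sHat_zero_apply_s2 (j : ℕ) (k : ℕ+) : sHat F 0 j (.s2 k) = 0 := by
  rcases Nat.eq_zero_or_pos j with rfl | hj
  · simp [sHat]
  · lift j to ℕ+ using hj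
    simp [sHat_zero_coe]

lemma hmul_smul (x y : HatH F) (c : F) : hmul F x (c • y) = c • hmul F x y :=
  map_smul _ c y

lemma hmul_aHat_zero_single (b : HatB) (c : F) :
    hmul F (aHat F 0) (single b c) = c • mulB F (.a 0) b := by
  simp [hmul, hatMul, aHat]

lemma mulB_a_zero_a (i : ℤ) :
    mulB F (.a 0) (.a i) = (-2 : F) • (aHat F 0 + aHat F i) + sHat F 0 i.natAbs := by
  simp [mulB]

lemma mulB_a_zero_s0 (j : ℕ+) :
    mulB F (.a 0) (.s0 j) =
      (-2 : F) • aHat F 0 + (aHat F (-j) + aHat F j) - single (.s0 j) 1 := by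
  simp [mulB, aMulS, show hatC 0 0 = 0 by decide, sHat_zero_coe]

lemma mulB_a_zero_s1 (k : ℕ+) :
    mulB F (.a 0) (.s1 k) =
      (-2 : F) • aHat F 0 + (aHat F (-(3 * k)) + aHat F (3 * k)) - single (.s1 k) 1
        - (single (.s0 (3 * k)) 1 - single (.s2 k) 1) := by
  simp [mulB, aMulS, show hatC 0 1 = 1 by decide, show (1 + 1 : ZMod 3) = 2 by decide,
    sHat_zero_three_mul, sHat_one_three_mul, sHat_two_three_mul]

lemma mulB_a_zero_s2 (k : ℕ+) :
    mulB F (.a 0) (.s2 k) =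
      (-2 : F) • aHat F 0 + (aHat F (-(3 * k)) + aHat F (3 * k)) - single (.s2 k) 1
        + (single (.s1 k) 1 - single (.s0 (3 * k)) 1) := by
  simp [mulB, aMulS, show hatC 0 2 = -1 by decide, show (2 - 1 : ZMod 3) = 1 by decide,
    show (2 + 1 : ZMod 3) = 0 by decide, sHat_zero_three_mul, sHat_one_three_mul,
    sHat_two_three_mul]
  abel

lemma hmul_aHat_zero_apply_eq {s : Set HatB} {b₀ : HatB} (φ : HatH F →ₗ[F] F)
    (h : ∀ b ∈ s, mulB F (.a 0) b b₀ = φ (single b 1)) {x : HatH F}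
    (hx : x ∈ supported F F s) : hmul F (aHat F 0) x b₀ = φ x := by
  rw [supported_eq_span_single] at hx
  refine LinearMap.eqOn_span (f := lapply b₀ ∘ₗ hatMul F (aHat F 0)) ?_ hx
  rintro _ ⟨b, hb, rfl⟩
  change hmul F (aHat F 0) (single b 1) b₀ = φ (single b 1)
  rw [hmul_aHat_zero_single, one_smul]
  exact h b hb

lemma hmul_aHat_zero_apply_s1 (x : HatH F) (k : ℕ+) :
    hmul F (aHat F 0) x (.s1 k) = x (.s2 k) - x (.s1 k) := by
  refine hmul_aHat_zero_apply_eq (s := Set.univ)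
    (lapply (HatB.s2 k) - lapply (HatB.s1 k) : HatH F →ₗ[F] F) (fun b _ => ?_) (by simp)
  cases b <;>
    simp [mulB_a_zero_a, mulB_a_zero_s0, mulB_a_zero_s1, mulB_a_zero_s2, aHat, single_apply]

lemma hmul_aHat_zero_apply_s2 (x : HatH F) (k : ℕ+) :
    hmul F (aHat F 0) x (.s2 k) = x (.s1 k) - x (.s2 k) := by
  refine hmul_aHat_zero_apply_eq (s := Set.univ)
    (lapply (HatB.s1 k) - lapply (HatB.s2 k) : HatH F →ₗ[F] F) (fun b _ => ?_) (by simp)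
  cases b <;>
    simp [mulB_a_zero_a, mulB_a_zero_s0, mulB_a_zero_s1, mulB_a_zero_s2, aHat, single_apply]

lemma hmul_aHat_zero_apply_s0 {x : HatH F}
    (hx : x ∈ supported F F (Set.range HatB.s1 ∪ Set.range HatB.s2)ᶜ) (n : ℕ+) :
    hmul F (aHat F 0) x (.s0 n) = x (.a (n : ℕ)) + x (.a (-(n : ℕ))) - x (.s0 n) := by
  refine hmul_aHat_zero_apply_eq (lapply (.a (n : ℕ)) + lapply (.a (-(n : ℕ))) - lapply (.s0 n))
    (fun b hb => ?_) hx
  have hn := n.pos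
  cases b with
  | a i =>
    simp [mulB_a_zero_a, aHat, single_apply, sHat_zero_apply_s0]
    split_ifs <;> first | (exfalso; omega) | simp
  | s0 j => simp [mulB_a_zero_s0, aHat, single_apply]
  | s1 k => exact absurd (Or.inl ⟨k, rfl⟩) hb
  | s2 k => exact absurd (Or.inr ⟨k, rfl⟩) hb

lemma hmul_aHat_zero_apply_a {x : HatH F}
    (hx : x ∈ supported F F (Set.range HatB.s1 ∪ Set.range HatB.s2)ᶜ) {n : ℕ+} {m : ℤ}
    (hm : m.natAbs = n) :
    hmul F (aHat F 0) x (.a m) = -2 * x (.a m) + x (.s0 n) := by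
  refine hmul_aHat_zero_apply_eq ((-2 : F) • lapply (.a m) + lapply (.s0 n)) (fun b hb => ?_) hx
  have hn := n.pos
  cases b with
  | a i =>
    simp [mulB_a_zero_a, aHat, single_apply]
    split_ifs <;> first | (exfalso; omega) | simp
  | s0 j =>
    simp [mulB_a_zero_s0, aHat, single_apply, ← PNat.coe_inj]
    split_ifs <;> first | (exfalso; omega) | simp
  | s1 k => exact absurd (Or.inl ⟨k, rfl⟩) hb
  | s2 k => exact absurd (Or.inr ⟨k, rfl⟩) hb

lemma aHat_zero_hmul_self : hmul F (aHat F 0) (aHat F 0) = (-4 : F) • aHat F 0 := by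
  calc hmul F (aHat F 0) (aHat F 0) = mulB F (.a 0) (.a 0) :=
        (hmul_aHat_zero_single (.a 0) 1).trans (one_smul F _)
    _ = (-4 : F) • aHat F 0 := by
        rw [mulB_a_zero_a, Int.natAbs_zero, sHat, dif_pos rfl, add_zero]
        module

section EigenvectorOne

variable {x : HatH F} (hx : hmul F (aHat F 0) x = x)
include hx

lemma apply_s1_s2_eq_zero_of_hmul_eq_self (h3 : (3 : F) ≠ 0) (k : ℕ+) :
    x (.s1 k) = 0 ∧ x (.s2 k) = 0 := by
  have e1 := hmul_aHat_zero_apply_s1 x k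
  have e2 := hmul_aHat_zero_apply_s2 x k
  rw [hx] at e1 e2
  have h1 : x (.s1 k) = 0 :=
    (mul_eq_zero.1 (by linear_combination 2 * e1 + e2)).resolve_left h3
  exact ⟨h1, by linear_combination -e1 + 2 * h1⟩

lemma mem_supported_of_hmul_eq_self (h3 : (3 : F) ≠ 0) :
    x ∈ supported F F (Set.range HatB.s1 ∪ Set.range HatB.s2)ᶜ := by
  rw [mem_supported']
  rintro b hb
  rw [Set.notMem_compl_iff] at hb
  rcases hb with ⟨k, rfl⟩ | ⟨k, rfl⟩
  exacts [(apply_s1_s2_eq_zero_of_hmul_eq_self hx h3 k).1,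
    (apply_s1_s2_eq_zero_of_hmul_eq_self hx h3 k).2]

lemma three_mul_apply_a_of_hmul_eq_self (h3 : (3 : F) ≠ 0) {n : ℕ+} {m : ℤ}
    (hm : m.natAbs = n) : 3 * x (.a m) = x (.s0 n) := by
  have e := hmul_aHat_zero_apply_a (mem_supported_of_hmul_eq_self hx h3) hm
  rw [hx] at e
  linear_combination e

lemma apply_s0_eq_zero_of_hmul_eq_self (h2 : (2 : F) ≠ 0) (h3 : (3 : F) ≠ 0) (n : ℕ+) :
    x (.s0 n) = 0 := by
  have eS := hmul_aHat_zero_apply_s0 (mem_supported_of_hmul_eq_self hx h3) n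
  rw [hx] at eS
  have eA := three_mul_apply_a_of_hmul_eq_self hx h3 (n := n) (m := (n : ℕ)) (by simp)
  have eA' := three_mul_apply_a_of_hmul_eq_self hx h3 (n := n) (m := -(n : ℕ)) (by simp)
  have h4 : (2 * 2 : F) ≠ 0 := mul_ne_zero h2 h2
  exact (mul_eq_zero.1 (by linear_combination 3 * eS + eA + eA')).resolve_left h4

lemma apply_a_eq_zero_of_hmul_eq_self (h2 : (2 : F) ≠ 0) (h3 : (3 : F) ≠ 0) {m : ℤ}
    (hm : m ≠ 0) : x (.a m) = 0 := by
  let n : ℕ+ := ⟨m.natAbs, Int.natAbs_pos.2 hm⟩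
  have e := three_mul_apply_a_of_hmul_eq_self hx h3 (n := n) rfl
  exact (mul_eq_zero.1 (e.trans (apply_s0_eq_zero_of_hmul_eq_self hx h2 h3 n))).resolve_left h3

lemma eq_smul_aHat_zero_of_hmul_eq_self (h2 : (2 : F) ≠ 0) (h3 : (3 : F) ≠ 0) :
    x = x (.a 0) • aHat F 0 := by
  ext b
  cases b with
  | a i =>
    rcases eq_or_ne i 0 with rfl | hi
    · simp [aHat]
    · simp [aHat, hi.symm, apply_a_eq_zero_of_hmul_eq_self hx h2 h3 hi]
  | s0 n => simp [aHat, apply_s0_eq_zero_of_hmul_eq_self hx h2 h3]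
  | s1 k => simp [aHat, (apply_s1_s2_eq_zero_of_hmul_eq_self hx h3 k).1]
  | s2 k => simp [aHat, (apply_s1_s2_eq_zero_of_hmul_eq_self hx h3 k).2]

end EigenvectorOne

/-- The axis `â₀` of `Ĥ` is primitive: the `1`-eigenspace of `ad_{â₀}` is `𝔽·â₀`. -/
theorem a0_primitive [CharP F 5] (x : HatH F) :
    hmul F (aHat F 0) x = x ↔ ∃ c : F, x = c • aHat F 0 := by
  have h5 : ((5 : ℕ) : F) = 0 := CharP.cast_eq_zero F 5
  have h2 : (2 : F) ≠ 0 := by exact_mod_cast (CharP.cast_eq_zero_iff F 5 2).not.2 (by norm_num)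
  have h3 : (3 : F) ≠ 0 := by exact_mod_cast (CharP.cast_eq_zero_iff F 5 3).not.2 (by norm_num)
  constructor
  · intro hx
    exact ⟨_, eq_smul_aHat_zero_of_hmul_eq_self hx h2 h3⟩
  · rintro ⟨c, rfl⟩
    rw [hmul_smul, aHat_zero_hmul_self, show (-4 : F) = 1 by linear_combination -h5, one_smul]

end HatAlgebra
end
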